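/- With notation as in the quasi-eigenvector construction: let z₁ ∈ ℂ\{0}, λ ∈ ℂ, v₁ ∈ ℂ^k with f(z₁)v₁ = λv₁, and suppose v₂ ∈ ℂ^k satisfies (A_1 + (A_0 − λ)z₁^{-1} + A_{-1}z₁^{-2})v₂ = −((A_0 − λ) + 2A_{-1}z₁^{-1})v₁. Define the infinite block vector u₂ with n-th block u₂^{(n)} = z₁^{-(n−1)}v₂ + (n−1)z₁^{-(n−2)}v₁ for n ≥ 1. Then (T(f)u₂)_m = λ(u₂)_m for every index m in block rows n ≥ 2. -/

import Mathlib

open scoped BigOperators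
open Matrix

noncomputable section

def tridiagA0 {k : ℕ} (a b c : Fin (k+1) → ℂ) : Matrix (Fin (k+1)) (Fin (k+1)) ℂ :=
  Matrix.of fun i j =>
    (if i = j then a i else 0) + (if (j : ℕ) = (i : ℕ) + 1 then b i else 0) +
      (if (i : ℕ) = (j : ℕ) + 1 then c j else 0)

def cornerAm1 {k : ℕ} (b : Fin (k+1) → ℂ) : Matrix (Fin (k+1)) (Fin (k+1)) ℂ :=
  Matrix.of fun i j => if i = Fin.last k ∧ j = 0 then b (Fin.last k) else 0

def cornerA1 {k : ℕ} (c : Fin (k+1) → ℂ) : Matrix (Fin (k+1)) (Fin (k+1)) ℂ :=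
  Matrix.of fun i j => if i = 0 ∧ j = Fin.last k then c (Fin.last k) else 0

/-- The symbol `f(z) = A₋₁ z⁻¹ + A₀ + A₁ z`. -/
def symb {k : ℕ} (a b c : Fin (k+1) → ℂ) (z : ℂ) : Matrix (Fin (k+1)) (Fin (k+1)) ℂ :=
  z⁻¹ • cornerAm1 b + tridiagA0 a b c + z • cornerA1 c

/-! Put `x = z₁⁻¹` and `P(x) = A₁ + x (A₀ - λ) + x² A₋₁`, so that `P(x) v₁ = 0` is the eigen-equation
`f(z₁) v₁ = λ v₁` multiplied by `z₁⁻¹`. The block sequence `x^(n-1) v₂ + (n-1) x^(n-2) v₁` is the geometric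
sequence `x^(n-1) v₂` plus the `x`-derivative of `x^(n-1) v₁`, so the three-term recurrence applied to it
equals `x^(n-2) (P(x) v₂ + P'(x) v₁) + (n-2) x^(n-3) P(x) v₁`. The Jordan-chain conditions on `(v₁, v₂)`
kill both terms. -/

section JordanChain

variable {ι K : Type*} [Fintype ι] [Field K]

-- Indexed by `ℤ` so that the three-term identity below holds for every `n`.
def jordanChainSeq (z : K) (v₁ v₂ : ι → K) (n : ℤ) : ι → K :=
  z ^ (1 - n) • v₂ + ((n : K) - 1) • z ^ (2 - n) • v₁

theorem mulVec_jordanChainSeq_three_term (Ap A₀ Am : Matrix ι ι K) {z : K} (hz : z ≠ 0)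
    (v₁ v₂ : ι → K) (n : ℤ) :
    Ap *ᵥ jordanChainSeq z v₁ v₂ (n - 1) + A₀ *ᵥ jordanChainSeq z v₁ v₂ n
        + Am *ᵥ jordanChainSeq z v₁ v₂ (n + 1)
      = z ^ (2 - n) • ((Ap + z⁻¹ • A₀ + z⁻¹ ^ 2 • Am) *ᵥ v₂ + (A₀ + (2 * z⁻¹) • Am) *ᵥ v₁)
        + (((n : K) - 2) * z ^ (3 - n)) • ((Ap + z⁻¹ • A₀ + z⁻¹ ^ 2 • Am) *ᵥ v₁) := by
  have hpow : ∀ k : ℤ, z ^ (k - n) = z ^ (-n) * z ^ k := fun k => by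
    rw [sub_eq_neg_add, zpow_add₀ hz]
  ext i
  simp only [jordanChainSeq, add_mulVec, mulVec_add, mulVec_smul, smul_mulVec, Pi.add_apply,
    Pi.smul_apply, smul_eq_mul, Int.cast_sub, Int.cast_add, Int.cast_one]
  rw [show (1 : ℤ) - (n - 1) = 2 - n by ring, show (2 : ℤ) - (n - 1) = 3 - n by ring,
    show (1 : ℤ) - (n + 1) = 0 - n by ring, show (2 : ℤ) - (n + 1) = 1 - n by ring]
  simp only [hpow, zpow_ofNat]
  field_simp
  ring

theorem jordanChainSeq_three_term_eq_zero (Ap A₀ Am : Matrix ι ι K) {z : K} (hz : z ≠ 0)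
    {v₁ v₂ : ι → K} (hv₁ : (Ap + z⁻¹ • A₀ + z⁻¹ ^ 2 • Am) *ᵥ v₁ = 0)
    (hv₂ : (Ap + z⁻¹ • A₀ + z⁻¹ ^ 2 • Am) *ᵥ v₂ = -((A₀ + (2 * z⁻¹) • Am) *ᵥ v₁)) (n : ℤ) :
    Ap *ᵥ jordanChainSeq z v₁ v₂ (n - 1) + A₀ *ᵥ jordanChainSeq z v₁ v₂ n
      + Am *ᵥ jordanChainSeq z v₁ v₂ (n + 1) = 0 := by
  rw [mulVec_jordanChainSeq_three_term Ap A₀ Am hz, hv₁, hv₂, neg_add_cancel, smul_zero,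
    smul_zero, add_zero]

end JordanChain

theorem inv_smul_symb_sub_smul_one {k : ℕ} (a b c : Fin (k+1) → ℂ) {z : ℂ} (hz : z ≠ 0)
    (lam : ℂ) :
    z⁻¹ • (symb a b c z - lam • 1)
      = cornerA1 c + z⁻¹ • (tridiagA0 a b c - lam • 1) + z⁻¹ ^ 2 • cornerAm1 b := by
  rw [symb, smul_sub, smul_add, smul_add, smul_sub, smul_smul, smul_smul, inv_mul_cancel₀ hz,
    one_smul, ← sq]
  abel

/-- quasi-eigenvector (generalized Jordan chain) construction: if
`f(z₁)v₁ = λv₁` and `(A₁ + (A₀-λ)z₁⁻¹ + A₋₁z₁⁻²)v₂ = -((A₀-λ) + 2A₋₁z₁⁻¹)v₁`, then the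
block vector with `n`-th block `z₁^{-(n-1)}v₂ + (n-1)z₁^{-(n-2)}v₁` satisfies the
eigenvalue equation for `T(f)` in all block rows `n ≥ 2`. -/
theorem stmt6 (k : ℕ) (a b c : Fin (k+1) → ℂ) (z₁ lam : ℂ) (hz : z₁ ≠ 0)
    (v₁ v₂ : Fin (k+1) → ℂ)
    (hv₁ : symb a b c z₁ *ᵥ v₁ = lam • v₁)
    (hv₂ : (cornerA1 c + z₁⁻¹ • (tridiagA0 a b c - lam • 1) + (z₁⁻¹) ^ 2 • cornerAm1 b) *ᵥ v₂
        = -(((tridiagA0 a b c - lam • 1) + (2 * z₁⁻¹) • cornerAm1 b) *ᵥ v₁))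
    (u₂ : ℕ → Fin (k+1) → ℂ)
    (hu₂ : ∀ n : ℕ, u₂ n = if n = 0 then 0 else
        z₁ ^ (1 - (n : ℤ)) • v₂ + ((n : ℂ) - 1) • z₁ ^ (2 - (n : ℤ)) • v₁) :
    ∀ n : ℕ, 2 ≤ n →
      cornerA1 c *ᵥ u₂ (n - 1) + tridiagA0 a b c *ᵥ u₂ n + cornerAm1 b *ᵥ u₂ (n + 1) =
        lam • u₂ n := by
  intro n hn
  have hu : ∀ m : ℕ, 1 ≤ m → u₂ m = jordanChainSeq z₁ v₁ v₂ m := fun m hm => by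
    rw [hu₂, if_neg (by omega), jordanChainSeq, Int.cast_natCast]
  have hPv₁ : (cornerA1 c + z₁⁻¹ • (tridiagA0 a b c - lam • 1) + z₁⁻¹ ^ 2 • cornerAm1 b) *ᵥ v₁
      = 0 := by
    rw [← inv_smul_symb_sub_smul_one a b c hz, smul_mulVec, sub_mulVec, hv₁, smul_mulVec,
      one_mulVec, sub_self, smul_zero]
  have hrec := jordanChainSeq_three_term_eq_zero _ _ _ hz hPv₁ hv₂ n
  rw [hu (n - 1) (by omega), hu n (by omega), hu (n + 1) (by omega), Nat.cast_sub (by omega),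
    Nat.cast_one, Nat.cast_succ]
  rw [sub_mulVec, smul_mulVec, one_mulVec] at hrec
  rw [← sub_eq_zero, ← hrec]
  abel

end
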